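/- arXiv:2003.01052 — 3 statements merged into one kernel-verified Lean document; each statement's English description precedes it below -/
import Mathlib

section
/- Closeness centrality satisfies the Bridge axiom: if {u,v} is a bridge in a connected graph G separating it into components with vertex sets V_u ∋ u and V_v ∋ v, then |V_u| < |V_v| implies f(u) < f(v), where f(x) = (Σ_{y∈V} d(x,y))^{-1}. -/
/-!
Deleting the bridge `{u, v}` puts every vertex on exactly one side, and a vertex `x` on `u`'s
side satisfies `d(v, x) = d(u, x) + 1`, because every walk from `v` to `x` crosses the bridge and
so passes through `u`; symmetrically on `v`'s side. Hence
`d(u, x) + [x ∈ V_u] = d(v, x) + [x ∈ V_v]` for every `x`, and summing gives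
`Σ d(u, ·) + |V_u| = Σ d(v, ·) + |V_v|`.
-/

open Finset

namespace SimpleGraph

variable {V : Type} {G : SimpleGraph V} {u v x : V}

lemma Reachable.reachable_deleteEdges_or (hx : G.Reachable u x) (huv : u ≠ v) :
    (G.deleteEdges {s(u, v)}).Reachable u x ∨ (G.deleteEdges {s(u, v)}).Reachable v x := by
  classical
  obtain ⟨p, hp⟩ := hx.symm.exists_isPath
  by_cases hep : s(u, v) ∈ p.edges
  · have hv := p.snd_mem_support_of_mem_edges hep
    have hu : u ∉ (p.takeUntil v hv).support :=
      Walk.endpoint_notMem_support_takeUntil hp hv huv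
    exact .inr (reachable_deleteEdges_iff_exists_walk.mpr
      ⟨p.takeUntil v hv, fun he ↦ hu ((p.takeUntil v hv).fst_mem_support_of_mem_edges he)⟩).symm
  · exact .inl (reachable_deleteEdges_iff_exists_walk.mpr ⟨p, hep⟩).symm

lemma IsBridge.dist_eq_dist_add_one (hadj : G.Adj u v) (hb : G.IsBridge s(u, v))
    (hx : (G.deleteEdges {s(u, v)}).Reachable u x) : G.dist v x = G.dist u x + 1 := by
  classical
  have hvu : G.dist v u = 1 := dist_eq_one_iff_adj.mpr hadj.symm
  have hupper : G.dist v x ≤ G.dist v u + G.dist u x :=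
    (hx.mono (deleteEdges_le _)).dist_triangle_right v
  have hvx : ¬ (G.deleteEdges {s(u, v)}).Reachable v x := fun hvx ↦ hb (hx.trans hvx.symm)
  obtain ⟨p, hp⟩ :=
    (hadj.symm.reachable.trans (hx.mono (deleteEdges_le _))).exists_walk_length_eq_dist
  have hu : u ∈ p.support :=
    p.fst_mem_support_of_mem_edges (p.mem_edges_of_not_reachable_deleteEdges hvx)
  have hsplit : (p.takeUntil u hu).length + (p.dropUntil u hu).length = p.length := by
    rw [← Walk.length_append, p.take_spec hu]
  have htake := dist_le (p.takeUntil u hu)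
  have hdrop := dist_le (p.dropUntil u hu)
  omega

lemma IsBridge.sum_dist_add_card_eq [Fintype V] (hG : G.Preconnected) (hadj : G.Adj u v)
    (hb : G.IsBridge s(u, v)) :
    ∑ y, G.dist u y + Nat.card {x | (G.deleteEdges {s(u, v)}).Reachable u x} =
      ∑ y, G.dist v y + Nat.card {x | (G.deleteEdges {s(u, v)}).Reachable v x} := by
  classical
  set H := G.deleteEdges {s(u, v)}
  have hcard (w : V) :
      Nat.card {x | H.Reachable w x} = ∑ x, if H.Reachable w x then 1 else 0 := by
    rw [← card_filter, Nat.card_eq_fintype_card, ← Set.toFinset_card, Set.toFinset_ofPred]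
  rw [hcard, hcard, ← sum_add_distrib, ← sum_add_distrib]
  refine sum_congr rfl fun x _ ↦ ?_
  obtain hux | hvx : H.Reachable u x ∨ H.Reachable v x :=
    (hG u x).reachable_deleteEdges_or hadj.ne
  · have hvx : ¬ H.Reachable v x := fun hvx ↦ hb (hux.trans hvx.symm)
    simp [hux, hvx, hb.dist_eq_dist_add_one hadj hux]
  · have hux : ¬ H.Reachable u x := fun hux ↦ hb (hux.trans hvx.symm)
    have hb' : G.IsBridge s(v, u) := by rwa [Sym2.eq_swap]
    have hvx' : (G.deleteEdges {s(v, u)}).Reachable v x := by rwa [Sym2.eq_swap]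
    simp [hux, hvx, hb'.dist_eq_dist_add_one hadj.symm hvx']

lemma Adj.sum_dist_pos [Fintype V] (hadj : G.Adj u v) : 0 < ∑ y, (G.dist u y : ℝ) := by
  have huv : G.dist u v = 1 := dist_eq_one_iff_adj.mpr hadj
  exact sum_pos' (fun _ _ ↦ Nat.cast_nonneg _) ⟨v, mem_univ v, by simp [huv]⟩

end SimpleGraph

/-- Closeness centrality satisfies the Bridge axiom: if `{u,v}` is a bridge in a finite
connected graph `G`, separating it into components with vertex sets `V_u ∋ u` and
`V_v ∋ v`, then `|V_u| < |V_v|` iff `f(u) < f(v)`, where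
`f(x) = (Σ_{y ∈ V} d(x,y))⁻¹`. -/
theorem closeness_bridge_axiom {V : Type} [Fintype V] (G : SimpleGraph V)
    (hG : G.Connected) (u v : V) (hb : G.IsBridge s(u, v)) :
    Nat.card {x | (G.deleteEdges {s(u, v)}).Reachable u x} <
        Nat.card {x | (G.deleteEdges {s(u, v)}).Reachable v x} ↔
      (∑ y, (G.dist u y : ℝ))⁻¹ < (∑ y, (G.dist v y : ℝ))⁻¹ := by
  have hadj : G.Adj u v := hb.reachable_iff_adj.mp (hG.preconnected u v)
  have hsum := hb.sum_dist_add_card_eq hG.preconnected hadj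
  have hcard_lt_iff : Nat.card {x | (G.deleteEdges {s(u, v)}).Reachable u x} <
      Nat.card {x | (G.deleteEdges {s(u, v)}).Reachable v x} ↔
        ∑ y, G.dist v y < ∑ y, G.dist u y := by
    omega
  rw [inv_lt_inv₀ hadj.sum_dist_pos hadj.symm.sum_dist_pos, hcard_lt_iff]
  exact_mod_cast Iff.rfl
end

section
/- Degree centrality violates the Bridge axiom: there exists a connected graph with a bridge {u,v} such that the component containing u is strictly smaller than the one containing v, yet deg(u) ≥ deg(v). -/
/-!
The witness is a broom on seven vertices: the hub `0` carries two leaves `1, 2` and is joined by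
the bridge `0 - 3` to the path `3 - 4 - 5 - 6`. Cutting the bridge leaves the components
`{0, 1, 2}` and `{3, 4, 5, 6}`, so the hub lies on the smaller side, yet its degree 3 exceeds
the degree 2 of `3`.
-/

open SimpleGraph

theorem SimpleGraph.natCard_setOf_adj_eq_degree {V : Type*} [Fintype V] (G : SimpleGraph V)
    [DecidableRel G.Adj] (v : V) : Nat.card {w | G.Adj v w} = G.degree v := by
  rw [Nat.card_eq_fintype_card]
  exact G.card_neighborSet_eq_degree v

def broom : SimpleGraph (Fin 7) :=
  fromEdgeSet {s(0, 1), s(0, 2), s(0, 3), s(3, 4), s(4, 5), s(5, 6)}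

instance : DecidableRel broom.Adj := by
  unfold broom
  infer_instance

theorem broom_connected : broom.Connected := by
  rw [connected_iff]
  exact ⟨by decide, ⟨0⟩⟩

theorem broom_isBridge : broom.IsBridge s(0, 3) := by
  rw [isBridge_iff]
  decide

theorem broom_deleteEdges_setOf_reachable_zero :
    {x | (broom.deleteEdges {s(0, 3)}).Reachable 0 x} = {0, 1, 2} := by
  ext x
  simp only [Set.mem_ofPred_eq, Set.mem_insert_iff, Set.mem_singleton_iff]
  revert x
  decide

theorem broom_deleteEdges_setOf_reachable_three :
    {x | (broom.deleteEdges {s(0, 3)}).Reachable 3 x} = {3, 4, 5, 6} := by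
  ext x
  simp only [Set.mem_ofPred_eq, Set.mem_insert_iff, Set.mem_singleton_iff]
  revert x
  decide

theorem broom_degree_zero : broom.degree 0 = 3 := by decide

theorem broom_degree_three : broom.degree 3 = 2 := by decide

/-- Degree centrality violates the Bridge axiom: there exists a finite connected graph
with a bridge `{u,v}` such that the component containing `u` is strictly smaller than
the one containing `v`, yet `deg(u) ≥ deg(v)`. -/
theorem degree_violates_bridge_axiom :
    ∃ (n : ℕ) (G : SimpleGraph (Fin n)) (u v : Fin n),
      G.Connected ∧ G.IsBridge s(u, v) ∧
      Nat.card {x | (G.deleteEdges {s(u, v)}).Reachable u x} <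
        Nat.card {x | (G.deleteEdges {s(u, v)}).Reachable v x} ∧
      Nat.card {w | G.Adj v w} ≤ Nat.card {w | G.Adj u w} := by
  refine ⟨7, broom, 0, 3, broom_connected, broom_isBridge, ?_, ?_⟩
  · rw [broom_deleteEdges_setOf_reachable_zero, broom_deleteEdges_setOf_reachable_three,
      Nat.card_eq_fintype_card, Nat.card_eq_fintype_card]
    decide
  · rw [natCard_setOf_adj_eq_degree, natCard_setOf_adj_eq_degree, broom_degree_zero,
      broom_degree_three]
    decide
end

section
/- If P = (p_{xy}) is an n×n symmetric matrix defining a proximity measure (p_{xy} + p_{xz} − p_{yz} ≤ p_{xx} for all x,y,z, with strict inequality when z = y and y ≠ x), then d(u,v) = ½(p_{uu} + p_{vv} − p_{uv} − p_{vu}) is a metric: it is nonnegative, symmetric, zero exactly on the diagonal, and satisfies the triangle inequality. -/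
/-!
Each metric axiom is the sum of two instances of the proximity inequality: `(u, v, v)` and
`(v, u, u)` give `d(u,v) ≥ 0`, strictly for `u ≠ v`, and, after symmetrising `P`,
`(y, x, z)` and `(y, z, x)` give the triangle inequality through `y`.
-/

/-- The distance obtained from a proximity matrix: `d(u,v) = ½(p_uu + p_vv − p_uv − p_vu)`. -/
noncomputable def proxDist {n : ℕ} (P : Fin n → Fin n → ℝ) (u v : Fin n) : ℝ :=
  (P u u + P v v - P u v - P v u) / 2

section

variable {n : ℕ} (P : Fin n → Fin n → ℝ)

theorem proxDist_comm (u v : Fin n) : proxDist P u v = proxDist P v u := by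
  unfold proxDist
  ring

theorem proxDist_self (u : Fin n) : proxDist P u u = 0 := by
  simp [proxDist]

theorem proxDist_nonneg (hprox : ∀ x y z, P x y + P x z - P y z ≤ P x x) (u v : Fin n) :
    0 ≤ proxDist P u v := by
  have huv := hprox u v v
  have hvu := hprox v u u
  unfold proxDist
  linarith

theorem proxDist_pos (hstrict : ∀ x y, y ≠ x → P x y + P x y - P y y < P x x)
    {u v : Fin n} (hne : u ≠ v) : 0 < proxDist P u v := by
  have huv := hstrict u v hne.symm
  have hvu := hstrict v u hne
  unfold proxDist
  linarith

theorem proxDist_eq_zero_iff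
    (hstrict : ∀ x y, y ≠ x → P x y + P x y - P y y < P x x) (u v : Fin n) :
    proxDist P u v = 0 ↔ u = v := by
  constructor
  · intro h
    by_contra hne
    exact (proxDist_pos P hstrict hne).ne' h
  · rintro rfl
    exact proxDist_self P u

theorem proxDist_triangle (hsym : ∀ x y, P x y = P y x)
    (hprox : ∀ x y z, P x y + P x z - P y z ≤ P x x) (x y z : Fin n) :
    proxDist P x z ≤ proxDist P x y + proxDist P y z := by
  have hxz := hprox y x z
  have hzx := hprox y z x
  unfold proxDist
  linarith [hsym x y, hsym y z, hsym x z]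

end

/-- If a symmetric matrix `P` defines a proximity measure
(`p_xy + p_xz − p_yz ≤ p_xx` for all `x, y, z`, strictly when `z = y` and `y ≠ x`),
then `d(u,v) = ½(p_uu + p_vv − p_uv − p_vu)` is a metric: nonnegative, symmetric,
zero exactly on the diagonal, and satisfying the triangle inequality. -/
theorem proximity_gives_metric {n : ℕ} (P : Fin n → Fin n → ℝ)
    (hsym : ∀ x y, P x y = P y x)
    (hprox : ∀ x y z, P x y + P x z - P y z ≤ P x x)
    (hstrict : ∀ x y, y ≠ x → P x y + P x y - P y y < P x x) :
    (∀ u v, 0 ≤ proxDist P u v) ∧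
    (∀ u v, proxDist P u v = proxDist P v u) ∧
    (∀ u v, proxDist P u v = 0 ↔ u = v) ∧
    (∀ x y z, proxDist P x z ≤ proxDist P x y + proxDist P y z) :=
  ⟨proxDist_nonneg P hprox, proxDist_comm P, proxDist_eq_zero_iff P hstrict,
    proxDist_triangle P hsym hprox⟩
end
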